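/- arXiv:2103.15363 — 2 statements merged into one kernel-verified Lean document; each statement's English description precedes it below -/
import Mathlib

section
/- Let U be a nonempty set of policies, J : U → ℝ the objective with J(u) ≥ 0 for all u ∈ U, J_c : U → ℝ the constraint function, ρ ∈ ℝ the tolerance, and define the Lagrangian L(u,λ) = J(u) + λ(J_c(u) − ρ). Suppose Slater's condition holds: there exists ũ ∈ U with J_c(ũ) < ρ. Suppose that for every λ ≥ 0 there is a policy u_λ ∈ U minimizing u ↦ L(u, λ) over U. Then the set {λ ≥ 0 : J_c(u_λ) ≤ ρ} is nonempty; in particular λ* = inf{λ ≥ 0 : J_c(u_λ) ≤ ρ} is finite. -/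
/-! Once `λ (ρ - J_c ũ) > J ũ`, the Slater point has negative Lagrangian value, whereas an
infeasible policy has nonnegative value because `J ≥ 0`; hence the minimizer `u_λ` is feasible. -/

theorem constraint_le_of_lagrangian_le {U : Type*} {J Jc : U → ℝ} {ρ lam : ℝ} {u ũ : U}
    (hJu : 0 ≤ J u) (hlam : 0 ≤ lam) (hlarge : J ũ < lam * (ρ - Jc ũ))
    (hle : J u + lam * (Jc u - ρ) ≤ J ũ + lam * (Jc ũ - ρ)) : Jc u ≤ ρ := by
  by_contra! hinfeasible
  nlinarith [mul_nonneg hlam (sub_pos.2 hinfeasible).le]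

theorem optimal_multiplier_exists_general
    {U : Type*}
    (J Jc : U → ℝ) (hJ : ∀ u, 0 ≤ J u) (ρ : ℝ)
    (L : U → ℝ → ℝ) (hL : ∀ u lam, L u lam = J u + lam * (Jc u - ρ))
    (hSlater : ∃ utilde : U, Jc utilde < ρ)
    (uopt : ℝ → U)
    (hmin : ∀ lam : ℝ, 0 ≤ lam → ∀ u : U, L (uopt lam) lam ≤ L u lam) :
    {lam : ℝ | 0 ≤ lam ∧ Jc (uopt lam) ≤ ρ}.Nonempty := by
  obtain ⟨ũ, hũ⟩ := hSlater
  obtain ⟨n, hn⟩ := exists_nat_gt (J ũ / (ρ - Jc ũ))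
  have hlarge : J ũ < n * (ρ - Jc ũ) := (div_lt_iff₀ (sub_pos.2 hũ)).1 hn
  have hopt := hmin n n.cast_nonneg ũ
  rw [hL, hL] at hopt
  exact ⟨n, n.cast_nonneg, constraint_le_of_lagrangian_le (hJ _) n.cast_nonneg hlarge hopt⟩

/-- Part (a) of the proof of Theorem 2: under Slater's condition, the set of multipliers
`λ ≥ 0` whose Lagrangian minimizer is feasible is nonempty, so
`λ* = inf {λ ≥ 0 | J_c(u_λ) ≤ ρ}` is finite. -/
theorem optimal_multiplier_exists
    {U : Type*} [Nonempty U]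
    (J Jc : U → ℝ) (hJ : ∀ u, 0 ≤ J u) (ρ : ℝ)
    (L : U → ℝ → ℝ) (hL : ∀ u lam, L u lam = J u + lam * (Jc u - ρ))
    (hSlater : ∃ utilde : U, Jc utilde < ρ)
    (uopt : ℝ → U)
    (hmin : ∀ lam : ℝ, 0 ≤ lam → ∀ u : U, L (uopt lam) lam ≤ L u lam) :
    {lam : ℝ | 0 ≤ lam ∧ Jc (uopt lam) ≤ ρ}.Nonempty :=
  optimal_multiplier_exists_general J Jc hJ ρ L hL hSlater uopt hmin
end

section
/- Let F be an n×n real matrix such that I − F is invertible, let Q be an n×n symmetric real matrix, W an n×n symmetric positive semi-definite matrix, M₃ ∈ ℝⁿ, and b̃ ∈ ℝⁿ. Suppose P_c is an n×n real symmetric matrix satisfying the Lyapunov equation P_c = 4QWQ + F^⊤ P_c F, and define g_c ∈ ℝⁿ by g_c^⊤ = (2 b̃^⊤ P_c F + 4 M₃^⊤ Q)(I − F)^{−1}, and set J_c = tr(P_c (W + b̃ b̃^⊤)) + g_c^⊤ b̃. Then the quadratic function V(x) = x^⊤ P_c x + g_c^⊤ x satisfies, for every x ∈ ℝⁿ, the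 Poisson (Bellman) equation V(x) = 4 x^⊤ QWQ x + 4 M₃^⊤ Q x − J_c + (Fx + b̃)^⊤ P_c (Fx + b̃) + tr(P_c W) + g_c^⊤ (Fx + b̃). -/
open Matrix

/-- The Poisson (Bellman) equation computation proving Lemma 4: the quadratic relative
value function `V(x) = xᵀ P_c x + g_cᵀ x` certifies that the long-run average risk cost
is `J_c = tr(P_c(W + b̃b̃ᵀ)) + g_cᵀ b̃`. -/
theorem risk_constraint_poisson_equation
    {n : ℕ}
    (F : Matrix (Fin n) (Fin n) ℝ) (hF : IsUnit (1 - F))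
    (Q : Matrix (Fin n) (Fin n) ℝ) (hQ : Q.IsSymm)
    (W : Matrix (Fin n) (Fin n) ℝ) (hW : W.PosSemidef)
    (M₃ btil : Fin n → ℝ)
    (Pc : Matrix (Fin n) (Fin n) ℝ) (hPc_symm : Pc.IsSymm)
    (hPc : Pc = 4 • (Q * W * Q) + Fᵀ * Pc * F)
    (gc : Fin n → ℝ)
    (hgc : gc = Matrix.vecMul
      ((2 : ℝ) • Matrix.vecMul (Matrix.vecMul btil Pc) F + (4 : ℝ) • Matrix.vecMul M₃ Q)
      (1 - F)⁻¹)
    (Jc : ℝ)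
    (hJc : Jc = (Pc * (W + vecMulVec btil btil)).trace + gc ⬝ᵥ btil) :
    ∀ x : Fin n → ℝ,
      x ⬝ᵥ Pc.mulVec x + gc ⬝ᵥ x
        = 4 * (x ⬝ᵥ (Q * W * Q).mulVec x) + 4 * (Matrix.vecMul M₃ Q ⬝ᵥ x) - Jc
          + (F.mulVec x + btil) ⬝ᵥ Pc.mulVec (F.mulVec x + btil)
          + (Pc * W).trace + gc ⬝ᵥ (F.mulVec x + btil) := by
  intro x
  -- symmetry of Pc in dot products
  have hsym : ∀ u v : Fin n → ℝ, u ⬝ᵥ Pc.mulVec v = v ⬝ᵥ Pc.mulVec u := by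
    intro u v
    rw [Matrix.dotProduct_mulVec, ← Matrix.mulVec_transpose, hPc_symm.eq,
      dotProduct_comm]
  -- trace of rank-one product
  have htr : (Pc * vecMulVec btil btil).trace = btil ⬝ᵥ Pc.mulVec btil := by
    simp only [Matrix.trace, Matrix.diag, Matrix.mul_apply, Matrix.vecMulVec_apply,
      dotProduct, Matrix.mulVec, Finset.mul_sum, Finset.sum_apply]
    refine Finset.sum_congr rfl fun i _ => Finset.sum_congr rfl fun j _ => by ring
  -- the g_c equation
  have hgc' : Matrix.vecMul gc (1 - F)
      = (2 : ℝ) • Matrix.vecMul (Matrix.vecMul btil Pc) F + (4 : ℝ) • Matrix.vecMul M₃ Q := by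
    rw [hgc, Matrix.vecMul_vecMul, Matrix.nonsing_inv_mul _ ((Matrix.isUnit_iff_isUnit_det _).mp hF),
      Matrix.vecMul_one]
  have hgcx : gc ⬝ᵥ x - (Matrix.vecMul gc F) ⬝ᵥ x
      = 2 * ((Matrix.vecMul (Matrix.vecMul btil Pc) F) ⬝ᵥ x) + 4 * ((Matrix.vecMul M₃ Q) ⬝ᵥ x) := by
    have h := congrArg (· ⬝ᵥ x) hgc'
    rw [Matrix.vecMul_sub, Matrix.vecMul_one] at h
    simpa [sub_dotProduct, add_dotProduct, smul_dotProduct,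
      smul_eq_mul] using h
  -- Lyapunov equation in quadratic-form form
  have h4 : (4 : ℕ) • (Q * W * Q) = (4 : ℝ) • (Q * W * Q) := by
    ext i j; simp
  have hPc' : Pc = (4 : ℝ) • (Q * W * Q) + Fᵀ * Pc * F := by
    conv_lhs => rw [hPc, h4]
  have hPx : x ⬝ᵥ Pc.mulVec x
      = 4 * (x ⬝ᵥ (Q * W * Q).mulVec x) + x ⬝ᵥ (Fᵀ * Pc * F).mulVec x := by
    conv_lhs => rw [hPc']
    rw [Matrix.add_mulVec, dotProduct_add, Matrix.smul_mulVec,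
      dotProduct_smul, smul_eq_mul]
  -- expand the shifted quadratic form
  have hFx : x ⬝ᵥ (Fᵀ * Pc * F).mulVec x = F.mulVec x ⬝ᵥ Pc.mulVec (F.mulVec x) := by
    rw [Matrix.mul_assoc, ← Matrix.mulVec_mulVec, Matrix.dotProduct_mulVec,
      Matrix.vecMul_transpose, Matrix.mulVec_mulVec]
  have hbF : btil ⬝ᵥ Pc.mulVec (F.mulVec x)
      = (Matrix.vecMul (Matrix.vecMul btil Pc) F) ⬝ᵥ x := by
    rw [Matrix.dotProduct_mulVec, Matrix.dotProduct_mulVec]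
  have hgcF : gc ⬝ᵥ F.mulVec x = (Matrix.vecMul gc F) ⬝ᵥ x := Matrix.dotProduct_mulVec _ _ _
  have hquad : (F.mulVec x + btil) ⬝ᵥ Pc.mulVec (F.mulVec x + btil)
      = F.mulVec x ⬝ᵥ Pc.mulVec (F.mulVec x)
        + 2 * (btil ⬝ᵥ Pc.mulVec (F.mulVec x)) + btil ⬝ᵥ Pc.mulVec btil := by
    rw [Matrix.mulVec_add, dotProduct_add, add_dotProduct,
      add_dotProduct, hsym (F.mulVec x) btil]
    ring
  rw [hJc, Matrix.mul_add, Matrix.trace_add, htr]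
  rw [dotProduct_add, hquad, hgcF, hbF, hPx, hFx]
  linarith [hgcx]
end
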